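/- arXiv:2006.07443 — 2 statements merged into one kernel-verified Lean document; each statement's English description precedes it below -/
import Mathlib

section
/- For every natural number T and every family Y : Fin T → (O → Q → ℝ) of player-2 pure strategies, there exists x* ∈ Δ₁ such that for all x ∈ Δ₁, ∑_{u : Fin T} u₁(x, Y u) ≤ ∑_{u : Fin T} u₁(x*, Y u); i.e., player 1 has a pure best response to any finite uniform mixture of player-2 pure strategies, even though u₁ is discontinuous. -/
/-- Player 1's per-slot payoff in the continuous Blotto game with margin `δ`. -/
noncomputable def blottoC1 (δ w x y : ℝ) : ℝ :=
  if x ≥ y + δ then w else if x ≤ y then -w else 0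

/-- Player 1's utility in the continuous Blotto game. -/
noncomputable def blottoU1 {Q O : Type*} [Fintype Q] [Fintype O]
    (p : O → ℝ) (v : O → Q → ℝ) (δ : ℝ) (x : Q → ℝ) (y : O → Q → ℝ) : ℝ :=
  ∑ o, p o * ∑ q, blottoC1 δ (v o q) (x q) (y o q)

/-!
Although `u₁` is discontinuous in `x`, each per-slot payoff takes only the three values
`w, -w, 0`, so the total payoff against finitely many opponents takes only finitely many
values. A function with finitely many values on a nonempty set attains its maximum there.
-/

open Set

namespace Set

theorem exists_max_image_of_finite_image {α β : Type*} [LinearOrder β] {s : Set α}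
    (f : α → β) (h : (f '' s).Finite) (hs : s.Nonempty) :
    ∃ a ∈ s, ∀ b ∈ s, f b ≤ f a := by
  obtain ⟨_, ⟨a, ha, rfl⟩, hmax⟩ := exists_max_image (f '' s) id h (hs.image f)
  exact ⟨a, ha, fun b hb => hmax _ (mem_image_of_mem f hb)⟩

theorem finite_range_sum {ι α M : Type*} [Fintype ι] [AddCommMonoid M] (f : ι → α → M)
    (hf : ∀ i, (range (f i)).Finite) : (range fun a => ∑ i, f i a).Finite := by
  have hvec : (range fun a i => f i a).Finite :=
    (Finite.pi hf).subset <| range_subset_iff.2 fun a i _ => mem_range_self a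
  simpa only [← range_comp, Function.comp_def] using hvec.image fun g => ∑ i, g i

theorem finite_range_const_mul {α M : Type*} [Mul M] (c : M) {f : α → M}
    (hf : (range f).Finite) : (range fun a => c * f a).Finite := by
  simpa only [← range_comp, Function.comp_def] using hf.image (c * ·)

end Set

def budgetSimplex (Q : Type*) [Fintype Q] (B : ℝ) : Set (Q → ℝ) :=
  {x | (∀ q, x q ≥ 0) ∧ ∑ q, x q = B}

section Blotto

variable {Q O : Type*} [Fintype Q] [Fintype O]

theorem budgetSimplex_nonempty [Nonempty Q] {B : ℝ} (hB : 0 ≤ B) :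
    (budgetSimplex Q B).Nonempty := by
  have hcard : (Fintype.card Q : ℝ) ≠ 0 := Nat.cast_ne_zero.2 Fintype.card_ne_zero
  refine ⟨fun _ => B / Fintype.card Q, fun _ => by positivity, ?_⟩
  simp only [Finset.sum_const, Finset.card_univ, nsmul_eq_mul]
  field_simp

theorem blottoC1_mem (δ w x y : ℝ) : blottoC1 δ w x y ∈ ({w, -w, 0} : Set ℝ) := by
  unfold blottoC1
  split_ifs <;> simp

theorem finite_range_blottoU1 (p : O → ℝ) (v : O → Q → ℝ) (δ : ℝ) (y : O → Q → ℝ) :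
    (range fun x => blottoU1 p v δ x y).Finite :=
  finite_range_sum _ fun o => finite_range_const_mul (p o) <| finite_range_sum _ fun q =>
    (toFinite {v o q, -v o q, 0}).subset <| range_subset_iff.2 fun _ => blottoC1_mem ..

end Blotto

theorem blotto_player1_pure_best_response_exists_general
    {Q O : Type*} [Fintype Q] [Fintype O] [Nonempty Q]
    (p : O → ℝ) (v : O → Q → ℝ) (B₁ : ℝ) (hB₁ : 0 < B₁) (δ : ℝ)
    (T : ℕ) (Y : Fin T → O → Q → ℝ) :
    ∃ xs : Q → ℝ, ((∀ q, xs q ≥ 0) ∧ ∑ q, xs q = B₁) ∧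
      ∀ x : Q → ℝ, ((∀ q, x q ≥ 0) ∧ ∑ q, x q = B₁) →
        ∑ u : Fin T, blottoU1 p v δ x (Y u) ≤ ∑ u : Fin T, blottoU1 p v δ xs (Y u) := by
  have hfinite : (range fun x => ∑ u : Fin T, blottoU1 p v δ x (Y u)).Finite :=
    finite_range_sum _ fun u => finite_range_blottoU1 p v δ (Y u)
  exact exists_max_image_of_finite_image _ (hfinite.subset (image_subset_range _ _))
    (budgetSimplex_nonempty hB₁.le)

/-- Player 1 has a pure best response in the budget simplex `Δ₁` to any finite
uniform mixture of player-2 pure strategies, despite the discontinuity of `u₁`. -/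
theorem blotto_player1_pure_best_response_exists
    {Q O : Type*} [Fintype Q] [Fintype O] [Nonempty Q] [Nonempty O]
    (p : O → ℝ) (v : O → Q → ℝ) (B₁ : ℝ) (hB₁ : 0 < B₁) (δ : ℝ) (hδ : 0 < δ)
    (T : ℕ) (Y : Fin T → O → Q → ℝ) :
    ∃ xs : Q → ℝ, ((∀ q, xs q ≥ 0) ∧ ∑ q, xs q = B₁) ∧
      ∀ x : Q → ℝ, ((∀ q, x q ≥ 0) ∧ ∑ q, x q = B₁) →
        ∑ u : Fin T, blottoU1 p v δ x (Y u) ≤ ∑ u : Fin T, blottoU1 p v δ xs (Y u) :=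
  blotto_player1_pure_best_response_exists_general p v B₁ hB₁ δ T Y
end

section
/- For every natural number T and every family X : Fin T → (Q → ℝ) of player-1 pure strategies, there exists a player-2 pure strategy y* (i.e., y* o ∈ Δ₂ for every o) such that for every player-2 pure strategy y, ∑_{u : Fin T} u₂(X u, y) ≤ ∑_{u : Fin T} u₂(X u, y*); i.e., player 2 has a pure best response to any finite uniform mixture of player-1 pure strategies. -/
/-- Player 2's per-slot payoff in the continuous Blotto game with margin `δ`. -/
noncomputable def blottoC2 (δ w x y : ℝ) : ℝ :=
  if x ≥ y + δ then -w else if x ≤ y then w else 0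

/-- Player 2's utility in the continuous Blotto game. -/
noncomputable def blottoU2 {Q O : Type*} [Fintype Q] [Fintype O]
    (p : O → ℝ) (v : O → Q → ℝ) (δ : ℝ) (x : Q → ℝ) (y : O → Q → ℝ) : ℝ :=
  ∑ o, p o * ∑ q, blottoC2 δ (v o q) (x q) (y o q)

/-!
Each per-slot payoff `blottoC2 δ w x y` takes one of the three values `-w`, `w`, `0`, so the total
utility of player 2 against the finitely many strategies `X u` takes only finitely many values as
`y` ranges over all allocations. A real function with finitely many values on a nonempty set
attains its maximum there, and the uniform allocation shows that player 2's strategy set is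
nonempty.
-/

open Finset

lemma Set.exists_isMaxOn_of_finite_image {α β : Type*} [LinearOrder β] {f : α → β}
    {s : Set α} (h : (f '' s).Finite) (hs : s.Nonempty) : ∃ a ∈ s, IsMaxOn f s a := by
  obtain ⟨a, ha, hmax⟩ := h.exists_maximalFor' f s hs
  exact ⟨a, ha, fun b hb => (le_total (f b) (f a)).elim id (hmax hb)⟩

lemma Set.finite_range_finset_sum {ι α M : Type*} [AddCommMonoid M] (s : Finset ι)
    {f : ι → α → M} (hf : ∀ i ∈ s, (Set.range (f i)).Finite) :
    (Set.range fun a => ∑ i ∈ s, f i a).Finite := by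
  classical
  induction s using Finset.induction_on with
  | empty => simpa only [sum_empty] using Set.finite_range_const
  | insert i s hi ih =>
    simp only [sum_insert hi]
    refine ((hf i (Finset.mem_insert_self i s)).image2 (· + ·)
      (ih fun j hj => hf j (Finset.mem_insert_of_mem hj))).subset ?_
    rintro _ ⟨a, rfl⟩
    exact Set.mem_image2_of_mem ⟨a, rfl⟩ ⟨a, rfl⟩

lemma exists_nonneg_sum_eq {ι K : Type*} [Fintype ι] [Nonempty ι] [Field K] [LinearOrder K]
    [IsStrictOrderedRing K] {B : K} (hB : 0 ≤ B) :
    ∃ z : ι → K, (∀ i, 0 ≤ z i) ∧ ∑ i, z i = B :=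
  ⟨fun _ => B / Fintype.card ι, fun _ => by positivity, by
    rw [sum_const, card_univ, nsmul_eq_mul]
    field_simp⟩

lemma finite_range_blottoC2 (δ w x : ℝ) : (Set.range (blottoC2 δ w x)).Finite :=
  (Set.toFinite ({-w, w, 0} : Set ℝ)).subset <| by
    rintro _ ⟨y, rfl⟩
    unfold blottoC2
    split_ifs <;> simp

lemma finite_range_blottoU2 {Q O : Type*} [Fintype Q] [Fintype O] (p : O → ℝ)
    (v : O → Q → ℝ) (δ : ℝ) (x : Q → ℝ) : (Set.range (blottoU2 p v δ x)).Finite := by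
  refine Set.finite_range_finset_sum univ fun o _ => ?_
  have hslots :
      (Set.range fun y : O → Q → ℝ => ∑ q, blottoC2 δ (v o q) (x q) (y o q)).Finite :=
    Set.finite_range_finset_sum univ fun q _ =>
      (finite_range_blottoC2 δ (v o q) (x q)).subset
        (Set.range_comp_subset_range (fun y : O → Q → ℝ => y o q) (blottoC2 δ (v o q) (x q)))
  exact (hslots.image (p o * ·)).subset (Set.range_comp (p o * ·) _).subset

theorem blotto_player2_pure_best_response_exists_general
    {Q O : Type*} [Fintype Q] [Fintype O] [Nonempty Q]
    (p : O → ℝ) (v : O → Q → ℝ)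
    (B₂ : ℝ) (hB₂ : 0 < B₂) (δ : ℝ)
    (T : ℕ) (X : Fin T → Q → ℝ) :
    ∃ ys : O → Q → ℝ, (∀ o, (∀ q, ys o q ≥ 0) ∧ ∑ q, ys o q = B₂) ∧
      ∀ y : O → Q → ℝ, (∀ o, (∀ q, y o q ≥ 0) ∧ ∑ q, y o q = B₂) →
        ∑ u : Fin T, blottoU2 p v δ (X u) y ≤ ∑ u : Fin T, blottoU2 p v δ (X u) ys := by
  set S : Set (O → Q → ℝ) := {y | ∀ o, (∀ q, y o q ≥ 0) ∧ ∑ q, y o q = B₂}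
  obtain ⟨z, hz⟩ := exists_nonneg_sum_eq (ι := Q) hB₂.le
  have hS : S.Nonempty := ⟨fun _ => z, fun _ => hz⟩
  have hfin := Set.finite_range_finset_sum univ fun u _ => finite_range_blottoU2 p v δ (X u)
  obtain ⟨ys, hys, hmax⟩ :=
    Set.exists_isMaxOn_of_finite_image (hfin.subset (Set.image_subset_range _ S)) hS
  exact ⟨ys, hys, fun y hy => hmax hy⟩

/-- Player 2 has a pure best response (an allocation in `Δ₂` for every outcome)
to any finite uniform mixture of player-1 pure strategies. -/
theorem blotto_player2_pure_best_response_exists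
    {Q O : Type*} [Fintype Q] [Fintype O] [Nonempty Q] [Nonempty O]
    (p : O → ℝ) (hp : ∀ o, 0 ≤ p o) (v : O → Q → ℝ)
    (B₂ : ℝ) (hB₂ : 0 < B₂) (δ : ℝ) (hδ : 0 < δ)
    (T : ℕ) (X : Fin T → Q → ℝ) :
    ∃ ys : O → Q → ℝ, (∀ o, (∀ q, ys o q ≥ 0) ∧ ∑ q, ys o q = B₂) ∧
      ∀ y : O → Q → ℝ, (∀ o, (∀ q, y o q ≥ 0) ∧ ∑ q, y o q = B₂) →
        ∑ u : Fin T, blottoU2 p v δ (X u) y ≤ ∑ u : Fin T, blottoU2 p v δ (X u) ys :=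
  blotto_player2_pure_best_response_exists_general p v B₂ hB₂ δ T X
end
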